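/- arXiv:2302.03771 — 8 statements merged into one kernel-verified Lean document; each statement's English description precedes it below -/
import Mathlib

section
/- In the weighted chain model: the vectors c_τ, as τ ranges over the elements of T that lie in the image of g, are nonzero, pairwise orthogonal with respect to ⟨·,·⟩_{w_K}, and their linear span equals the orthogonal complement of ker(f) with respect to ⟨·,·⟩_{w_K}, i.e. the set {x ∈ ℝ^S : ⟨x, k⟩_{w_K} = 0 for every k ∈ ker(f)}. (This is the first half of the paper's Lemma on the canonical orthogonal basis of ker(f_q)^⊥ for a simplicial map.) -/
/-- Weighted chain model: the vectors `c τ`, for `τ` in the image of `g`, are nonzero,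
pairwise orthogonal w.r.t. the weighted inner product `⟨x,y⟩ = ∑ σ, x σ * y σ / wK σ`,
and their span equals the orthogonal complement of `ker f`. -/
theorem canonical_orthogonal_basis_of_ker_perp
    {S T : Type*} [Fintype S] [Fintype T] [DecidableEq S] [DecidableEq T]
    (wK : S → ℝ) (hwK : ∀ σ, 0 < wK σ)
    (wL : T → ℝ) (hwL : ∀ τ, 0 < wL τ)
    (g : S → Option T) (ε : S → ℝ) (hε : ∀ σ, ε σ = 1 ∨ ε σ = -1)
    (f : (S → ℝ) →ₗ[ℝ] (T → ℝ))
    (hf_some : ∀ σ τ, g σ = some τ →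
      f (Pi.single σ 1) = ε σ • (Pi.single τ 1 : T → ℝ))
    (hf_none : ∀ σ, g σ = none → f (Pi.single σ 1) = 0)
    (c : T → (S → ℝ))
    (hc : ∀ τ, c τ =
      ∑ σ ∈ Finset.univ.filter (fun σ => g σ = some τ),
        (ε σ * wK σ) • (Pi.single σ 1 : S → ℝ)) :
    (∀ τ, (∃ σ, g σ = some τ) → c τ ≠ 0) ∧
    (∀ τ τ', (∃ σ, g σ = some τ) → (∃ σ, g σ = some τ') → τ ≠ τ' →
      ∑ σ, c τ σ * c τ' σ / wK σ = 0) ∧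
    ((Submodule.span ℝ {v : S → ℝ | ∃ τ, (∃ σ, g σ = some τ) ∧ v = c τ} : Set (S → ℝ)) =
      {x : S → ℝ | ∀ k : S → ℝ, f k = 0 → ∑ σ, x σ * k σ / wK σ = 0}) := by
  classical
  -- sign squares
  have hε2 : ∀ σ, ε σ * ε σ = 1 := by
    intro σ; rcases hε σ with h | h <;> rw [h] <;> norm_num
  have hεne : ∀ σ, ε σ ≠ 0 := by
    intro σ; rcases hε σ with h | h <;> rw [h] <;> norm_num
  -- pointwise value of c
  have hval : ∀ τ σ, c τ σ = if g σ = some τ then ε σ * wK σ else 0 := by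
    intro τ σ
    rw [hc]
    rw [Finset.sum_apply]
    simp only [Pi.smul_apply, Pi.single_apply, smul_eq_mul, mul_ite, mul_one, mul_zero]
    rw [Finset.sum_ite_eq (Finset.univ.filter (fun σ' => g σ' = some τ)) σ
      (fun σ' => ε σ' * wK σ')]
    simp [Finset.mem_filter]
  -- evaluation of f
  have hfk : ∀ (k : S → ℝ) (τ' : T),
      f k τ' = ∑ σ ∈ Finset.univ.filter (fun σ => g σ = some τ'), ε σ * k σ := by
    intro k τ'
    have hk : k = ∑ σ, k σ • (Pi.single σ 1 : S → ℝ) := by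
      funext j
      rw [Finset.sum_apply]
      simp [Pi.single_apply]
    conv_lhs => rw [hk]
    rw [map_sum, Finset.sum_apply]
    rw [Finset.sum_filter]
    apply Finset.sum_congr rfl
    intro σ _
    rcases h : g σ with _ | τ
    · simp [hf_none σ h, h]
    · rw [map_smul, hf_some σ τ h]
      by_cases hτ : τ = τ'
      · simp [h, hτ, mul_comm]
      · have hne : ¬ g σ = some τ' := by
          rw [h]; exact fun e => hτ (Option.some.inj e)
        simp [Pi.single_apply, hτ, hne]
  -- inner product of c τ with any k equals f k τ
  have hinner : ∀ (τ : T) (k : S → ℝ), ∑ σ, c τ σ * k σ / wK σ = f k τ := by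
    intro τ k
    rw [hfk]
    rw [Finset.sum_filter]
    apply Finset.sum_congr rfl
    intro σ _
    rw [hval]
    by_cases h : g σ = some τ
    · rw [if_pos h, if_pos h, mul_right_comm, mul_div_assoc, div_self (hwK σ).ne', mul_one]
    · rw [if_neg h, if_neg h, zero_mul, zero_div]
  refine ⟨?_, ?_, ?_⟩
  · -- nonzero
    rintro τ ⟨σ, hσ⟩ hzero
    have := hval τ σ
    rw [hzero] at this
    simp only [Pi.zero_apply, hσ, if_true] at this
    exact (mul_ne_zero (hεne σ) (hwK σ).ne') this.symm
  · -- orthogonality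
    intro τ τ' _ _ hττ'
    apply Finset.sum_eq_zero
    intro σ _
    rw [hval, hval]
    by_cases h : g σ = some τ
    · have h' : g σ ≠ some τ' := by
        rw [h]; exact fun e => hττ' (Option.some.inj e)
      rw [if_pos h, if_neg h', mul_zero, zero_div]
    · simp [h]
  · -- span equals orthogonal complement
    apply Set.Subset.antisymm
    · -- span ⊆ perp
      intro x hx
      let W : Submodule ℝ (S → ℝ) :=
        { carrier := {x : S → ℝ | ∀ k : S → ℝ, f k = 0 → ∑ σ, x σ * k σ / wK σ = 0}
          add_mem' := by
            intro a b ha hb k hk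
            have := ha k hk
            have := hb k hk
            simp only [Pi.add_apply, add_mul, add_div, Finset.sum_add_distrib]
            rw [ha k hk, hb k hk, add_zero]
          zero_mem' := by intro k hk; simp
          smul_mem' := by
            intro r a ha k hk
            have heq : ∑ σ, (r • a) σ * k σ / wK σ = r * ∑ σ, a σ * k σ / wK σ := by
              rw [Finset.mul_sum]
              apply Finset.sum_congr rfl
              intros
              simp only [Pi.smul_apply, smul_eq_mul]
              ring
            rw [heq, ha k hk, mul_zero] }
      have hle : Submodule.span ℝ {v : S → ℝ | ∃ τ, (∃ σ, g σ = some τ) ∧ v = c τ} ≤ W := by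
        rw [Submodule.span_le]
        rintro v ⟨τ, _, rfl⟩
        intro k hk
        rw [hinner τ k, hk]
        rfl
      exact hle hx
    · -- perp ⊆ span
      intro x hx
      simp only [Set.mem_setOf_eq] at hx
      -- x vanishes where g is none
      have hnone : ∀ σ, g σ = none → x σ = 0 := by
        intro σ h
        have hk : f (Pi.single σ 1) = 0 := hf_none σ h
        have := hx (Pi.single σ 1) hk
        simp only [Pi.single_apply, mul_ite, mul_one, mul_zero] at this
        rw [Finset.sum_congr rfl (fun σ' _ => by
          rw [ite_div, zero_div])] at this
        rw [Finset.sum_ite_eq' Finset.univ σ (fun σ' => x σ' / wK σ')] at this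
        simp only [Finset.mem_univ, if_true] at this
        exact (div_eq_zero_iff.mp this).resolve_right (hwK σ).ne'
      -- the ratio is constant on fibers
      have hconst : ∀ σ σ' τ, g σ = some τ → g σ' = some τ →
          ε σ * x σ / wK σ = ε σ' * x σ' / wK σ' := by
        intro σ σ' τ h h'
        by_cases hss : σ = σ'
        · rw [hss]
        · set k : S → ℝ := ε σ • (Pi.single σ 1 : S → ℝ) - ε σ' • (Pi.single σ' 1 : S → ℝ)
            with hkdef
          have hk : f k = 0 := by
            rw [hkdef, map_sub, map_smul, map_smul, hf_some σ τ h, hf_some σ' τ h',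
              smul_smul, smul_smul, hε2, hε2, sub_self]
          have h0 := hx k hk
          have hkval : ∀ σ'', k σ'' = ε σ * (if σ'' = σ then 1 else 0)
              - ε σ' * (if σ'' = σ' then 1 else 0) := by
            intro σ''
            simp [hkdef, Pi.single_apply]
          rw [Finset.sum_congr rfl (fun σ'' _ => by
            rw [hkval σ'', mul_sub, sub_div])] at h0
          rw [Finset.sum_sub_distrib] at h0
          have e1 : ∑ σ'', x σ'' * (ε σ * (if σ'' = σ then 1 else 0)) / wK σ''
              = x σ * ε σ / wK σ := by
            rw [Finset.sum_congr rfl (fun σ'' _ => by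
              rw [mul_ite, mul_one, mul_zero, mul_ite, mul_zero, ite_div, zero_div])]
            rw [Finset.sum_ite_eq' Finset.univ σ (fun σ'' => x σ'' * ε σ / wK σ'')]
            simp
          have e2 : ∑ σ'', x σ'' * (ε σ' * (if σ'' = σ' then 1 else 0)) / wK σ''
              = x σ' * ε σ' / wK σ' := by
            rw [Finset.sum_congr rfl (fun σ'' _ => by
              rw [mul_ite, mul_one, mul_zero, mul_ite, mul_zero, ite_div, zero_div])]
            rw [Finset.sum_ite_eq' Finset.univ σ' (fun σ'' => x σ'' * ε σ' / wK σ'')]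
            simp
          rw [e1, e2, sub_eq_zero] at h0
          rw [mul_comm (ε σ), mul_comm (ε σ')]
          exact h0
      -- coefficients
      set r : T → ℝ := fun τ =>
        if h : ∃ σ, g σ = some τ then ε h.choose * x h.choose / wK h.choose else 0 with hrdef
      have hr : ∀ σ τ, g σ = some τ → r τ = ε σ * x σ / wK σ := by
        intro σ τ h
        have hex : ∃ σ, g σ = some τ := ⟨σ, h⟩
        rw [hrdef]
        simp only [hex, dif_pos]
        exact hconst hex.choose σ τ hex.choose_spec h
      have hxeq : x = ∑ τ, r τ • c τ := by
        funext σ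
        rw [Finset.sum_apply]
        simp only [Pi.smul_apply, smul_eq_mul]
        rcases h : g σ with _ | τ
        · rw [hnone σ h]
          symm
          apply Finset.sum_eq_zero
          intro τ' _
          rw [hval]
          simp [h]
        · rw [Finset.sum_congr rfl (fun τ' _ => by rw [hval τ' σ])]
          have : ∀ τ', r τ' * (if g σ = some τ' then ε σ * wK σ else 0)
              = if τ' = τ then r τ' * (ε σ * wK σ) else 0 := by
            intro τ'
            by_cases hτ' : τ' = τ
            · subst hτ'; simp [h]
            · have : g σ ≠ some τ' := by rw [h]; simpa using fun e => hτ' e.symm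
              simp [this, hτ']
          rw [Finset.sum_congr rfl (fun τ' _ => this τ')]
          rw [Finset.sum_ite_eq' Finset.univ τ (fun τ' => r τ' * (ε σ * wK σ))]
          simp only [Finset.mem_univ, if_true]
          rw [hr σ τ h]
          have hw := (hwK σ).ne'
          field_simp
          rcases hε σ with h1 | h1 <;> rw [h1] <;> ring
      rw [hxeq]
      apply Submodule.sum_mem
      intro τ _
      by_cases hτ : ∃ σ, g σ = some τ
      · exact Submodule.smul_mem _ _ (Submodule.subset_span ⟨τ, hτ, rfl⟩)
      · have : r τ = 0 := by rw [hrdef]; simp [hτ]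
        rw [this, zero_smul]
        exact Submodule.zero_mem _
end

section
/- In the weighted chain model, assume g is weight preserving. Then f restricted to the span of the vectors c_τ (equivalently, to the ⟨·,·⟩_{w_K}-orthogonal complement of ker(f)) is an isometry: for all x, y in span{c_τ : τ in the image of g}, ⟨x, y⟩_{w_K} = ⟨f(x), f(y)⟩_{w_L}. (This is the second half of the paper's Lemma stating that the restriction of f_q to ker(f_q)^⊥ is an isometry onto Im(f_q).) -/
/-- Weighted chain model, with `g` weight preserving: the restriction of `f` to the span of
the vectors `c τ` (the orthogonal complement of `ker f` w.r.t. the weighted inner product)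
is an isometry onto the image of `f`. -/
theorem restriction_of_f_to_ker_perp_is_isometry
    {S T : Type*} [Fintype S] [Fintype T] [DecidableEq S] [DecidableEq T]
    (wK : S → ℝ) (hwK : ∀ σ, 0 < wK σ)
    (wL : T → ℝ) (hwL : ∀ τ, 0 < wL τ)
    (g : S → Option T) (ε : S → ℝ) (hε : ∀ σ, ε σ = 1 ∨ ε σ = -1)
    (f : (S → ℝ) →ₗ[ℝ] (T → ℝ))
    (hf_some : ∀ σ τ, g σ = some τ →
      f (Pi.single σ 1) = ε σ • (Pi.single τ 1 : T → ℝ))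
    (hf_none : ∀ σ, g σ = none → f (Pi.single σ 1) = 0)
    (c : T → (S → ℝ))
    (hc : ∀ τ, c τ =
      ∑ σ ∈ Finset.univ.filter (fun σ => g σ = some τ),
        (ε σ * wK σ) • (Pi.single σ 1 : S → ℝ))
    (hwp : ∀ τ, (∃ σ, g σ = some τ) →
      wL τ = ∑ σ ∈ Finset.univ.filter (fun σ => g σ = some τ), wK σ) :
    ∀ x y : S → ℝ,
      x ∈ Submodule.span ℝ {v : S → ℝ | ∃ τ, (∃ σ, g σ = some τ) ∧ v = c τ} →
      y ∈ Submodule.span ℝ {v : S → ℝ | ∃ τ, (∃ σ, g σ = some τ) ∧ v = c τ} →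
      ∑ σ, x σ * y σ / wK σ = ∑ τ, f x τ * f y τ / wL τ := by
  intro x y hx hy
  -- pointwise formula for c τ
  have hcapply : ∀ τ σ, c τ σ = if g σ = some τ then ε σ * wK σ else 0 := by
    intro τ σ
    rw [hc, Finset.sum_apply]
    by_cases h : g σ = some τ
    · rw [Finset.sum_eq_single σ]
      · simp [h]
      · intro b _ hne
        simp [Pi.single_apply, hne]
      · intro habs
        simp [h] at habs
    · simp only [h, if_false]
      apply Finset.sum_eq_zero
      intro b hb
      have hb' : g b = some τ := by simpa using hb
      have hne : b ≠ σ := by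
        rintro rfl; exact h hb'
      simp [Pi.single_apply, hne]
  have hε2 : ∀ σ, ε σ * ε σ = 1 := by
    intro σ; rcases hε σ with h | h <;> rw [h] <;> ring
  -- image of generators
  have hfc : ∀ τ, (∃ σ, g σ = some τ) → f (c τ) = wL τ • (Pi.single τ 1 : T → ℝ) := by
    intro τ hτ
    rw [hc, map_sum]
    have hterm : ∀ σ ∈ Finset.univ.filter (fun σ => g σ = some τ),
        f ((ε σ * wK σ) • (Pi.single σ 1 : S → ℝ)) = wK σ • (Pi.single τ 1 : T → ℝ) := by
      intro σ hσ
      have hσ' : g σ = some τ := by simpa using hσ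
      rw [map_smul, hf_some σ τ hσ', smul_smul]
      have h1 : ε σ * wK σ * ε σ = (ε σ * ε σ) * wK σ := by ring
      rw [h1, hε2, one_mul]
    rw [Finset.sum_congr rfl hterm, ← Finset.sum_smul, ← hwp τ hτ]
  -- equality on generators
  have hgen : ∀ τ τ', (∃ σ, g σ = some τ) → (∃ σ, g σ = some τ') →
      ∑ σ, c τ σ * c τ' σ / wK σ = ∑ t, f (c τ) t * f (c τ') t / wL t := by
    intro τ τ' hτ hτ'
    have hL : ∑ σ, c τ σ * c τ' σ / wK σ = if τ = τ' then wL τ else 0 := by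
      by_cases h : τ = τ'
      · subst h
        simp only [if_true]
        rw [hwp τ hτ, Finset.sum_filter]
        apply Finset.sum_congr rfl
        intro σ _
        simp only [hcapply]
        by_cases hσ : g σ = some τ
        · simp only [hσ, if_true]
          rw [div_eq_iff (hwK σ).ne',
            show ε σ * wK σ * (ε σ * wK σ) = (ε σ * ε σ) * (wK σ * wK σ) from by ring,
            hε2 σ, one_mul]
        · simp [hσ]
      · simp only [h, if_false]
        apply Finset.sum_eq_zero
        intro σ _
        simp only [hcapply]
        by_cases hσ : g σ = some τ
        · have : ¬ g σ = some τ' := by rw [hσ]; simp [h]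
          simp [this]
        · simp [hσ]
    have hR : ∑ t, f (c τ) t * f (c τ') t / wL t = if τ = τ' then wL τ else 0 := by
      rw [hfc τ hτ, hfc τ' hτ']
      by_cases h : τ = τ'
      · subst h
        simp only [if_true]
        rw [Finset.sum_eq_single τ]
        · simp only [Pi.smul_apply, Pi.single_eq_same, smul_eq_mul, mul_one]
          rw [mul_div_assoc, div_self (hwL τ).ne', mul_one]
        · intro b _ hne
          simp [Pi.single_apply, hne]
        · simp
      · simp only [h, if_false]
        apply Finset.sum_eq_zero
        intro t _
        by_cases ht : t = τ
        · subst ht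
          have : ¬ (t = τ') := h
          simp [Pi.single_apply, this]
        · simp [Pi.single_apply, ht]
    rw [hL, hR]
  -- bilinear extension
  have main : ∀ x ∈ Submodule.span ℝ {v : S → ℝ | ∃ τ, (∃ σ, g σ = some τ) ∧ v = c τ},
      ∀ y ∈ Submodule.span ℝ {v : S → ℝ | ∃ τ, (∃ σ, g σ = some τ) ∧ v = c τ},
      ∑ σ, x σ * y σ / wK σ = ∑ t, f x t * f y t / wL t := by
    intro x hx
    induction hx using Submodule.span_induction with
    | mem v hv =>
      obtain ⟨τ, hτ, rfl⟩ := hv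
      intro y hy
      induction hy using Submodule.span_induction with
      | mem w hw =>
        obtain ⟨τ', hτ', rfl⟩ := hw
        exact hgen τ τ' hτ hτ'
      | zero => simp
      | add y₁ y₂ _ _ ih1 ih2 =>
        rw [map_add]
        calc ∑ σ, c τ σ * (y₁ + y₂) σ / wK σ
            = (∑ σ, c τ σ * y₁ σ / wK σ) + ∑ σ, c τ σ * y₂ σ / wK σ := by
              rw [← Finset.sum_add_distrib]
              exact Finset.sum_congr rfl fun σ _ => by simp [Pi.add_apply]; ring
          _ = (∑ t, f (c τ) t * f y₁ t / wL t) + ∑ t, f (c τ) t * f y₂ t / wL t := by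
              rw [ih1, ih2]
          _ = ∑ t, f (c τ) t * (f y₁ + f y₂) t / wL t := by
              rw [← Finset.sum_add_distrib]
              exact Finset.sum_congr rfl fun t _ => by simp [Pi.add_apply]; ring
      | smul a y₁ _ ih =>
        rw [map_smul]
        calc ∑ σ, c τ σ * (a • y₁) σ / wK σ
            = a * ∑ σ, c τ σ * y₁ σ / wK σ := by
              rw [Finset.mul_sum]
              exact Finset.sum_congr rfl fun σ _ => by simp [Pi.smul_apply]; ring
          _ = a * ∑ t, f (c τ) t * f y₁ t / wL t := by rw [ih]
          _ = ∑ t, f (c τ) t * (a • f y₁) t / wL t := by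
              rw [Finset.mul_sum]
              exact Finset.sum_congr rfl fun t _ => by simp [Pi.smul_apply]; ring
    | zero => intro y hy; simp
    | add x₁ x₂ _ _ ih1 ih2 =>
      intro y hy
      rw [map_add]
      calc ∑ σ, (x₁ + x₂) σ * y σ / wK σ
          = (∑ σ, x₁ σ * y σ / wK σ) + ∑ σ, x₂ σ * y σ / wK σ := by
            rw [← Finset.sum_add_distrib]
            exact Finset.sum_congr rfl fun σ _ => by simp [Pi.add_apply]; ring
        _ = (∑ t, f x₁ t * f y t / wL t) + ∑ t, f x₂ t * f y t / wL t := by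
            rw [ih1 y hy, ih2 y hy]
        _ = ∑ t, (f x₁ + f x₂) t * f y t / wL t := by
            rw [← Finset.sum_add_distrib]
            exact Finset.sum_congr rfl fun t _ => by simp [Pi.add_apply]; ring
    | smul a x₁ _ ih =>
      intro y hy
      rw [map_smul]
      calc ∑ σ, (a • x₁) σ * y σ / wK σ
          = a * ∑ σ, x₁ σ * y σ / wK σ := by
            rw [Finset.mul_sum]
            exact Finset.sum_congr rfl fun σ _ => by simp [Pi.smul_apply]; ring
        _ = a * ∑ t, f x₁ t * f y t / wL t := by rw [ih y hy]
        _ = ∑ t, (a • f x₁) t * f y t / wL t := by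
            rw [Finset.mul_sum]
            exact Finset.sum_congr rfl fun t _ => by simp [Pi.smul_apply]; ring
  exact main x hx y hy
end

section
/- (The Schur restriction is well-defined / basis independence of the generalized Schur complement.) Let A be a d×d, B a d×e, C an e×d, and D an e×e real matrix, and let M = [[A, B], [C, D]] be the corresponding (d+e)×(d+e) block matrix. Let P be an invertible d×d real matrix and Q an invertible e×e real matrix, and set M' := [[P⁻¹, 0], [0, Q⁻¹]]·M·[[P, 0], [0, Q]], with block decomposition M' = [[A', B'], [C', D']] (so A' = P⁻¹AP, B' = P⁻¹BQ, C' = Q⁻¹CP, D' = Q⁻¹DQ). If M' is positive semi-definite, then A' − B'·(D')†·C' = P⁻¹·(A − B·D†·C)·P, where D† and (D')† are the Moore–Penrose pseudoinverses of D and D' respectively. -/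
open Matrix

/-- `Ddag` is a Moore–Penrose pseudoinverse of `D`. -/
def IsMoorePenrose {n m : Type*} [Fintype n] [Fintype m]
    (D : Matrix n m ℝ) (Ddag : Matrix m n ℝ) : Prop :=
  D * Ddag * D = D ∧ Ddag * D * Ddag = Ddag ∧
    (D * Ddag)ᵀ = D * Ddag ∧ (Ddag * D)ᵀ = Ddag * D

/-!
Call `G` an inner inverse of `D` if `D G D = D`; the pseudoinverse is one. If
`[[A, B], [C, D]]` is positive semidefinite, a vector killed by `D` is isotropic for it, hence
killed by the whole matrix, hence by `B`; applied to the columns of `1 - G D` and of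
`(1 - D G)ᴴ` this gives `B G D = B` and `D G C = C`. Then `B H C = (B G D) H (D G C) = B G C`
for every inner inverse `H` of `D`, so the Schur complement of `M'` may be computed with the
inner inverse `Q⁻¹ D† Q` of `D' = Q⁻¹ D Q` instead of `D'†`, after which the conjugations
telescope.
-/

open scoped ComplexOrder

namespace Matrix

section PosSemidef

variable {𝕜 m n : Type*} [RCLike 𝕜] [Fintype m] [Fintype n]

open scoped MatrixOrder in
theorem PosSemidef.mul_eq_zero_of_conjTranspose_mul_mul_eq_zero {l : Type*} [Fintype l]
    {M : Matrix n n 𝕜} (hM : M.PosSemidef) {X : Matrix n l 𝕜} (h : Xᴴ * M * X = 0) :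
    M * X = 0 := by
  classical
  obtain ⟨N, rfl⟩ := CStarAlgebra.nonneg_iff_eq_star_mul_self.mp hM.nonneg
  rw [star_eq_conjTranspose] at h ⊢
  have hNX : N * X = 0 := conjTranspose_mul_self_eq_zero.mp <| by
    simpa only [conjTranspose_mul, Matrix.mul_assoc] using h
  rw [Matrix.mul_assoc, hNX, Matrix.mul_zero]

variable [DecidableEq m] [DecidableEq n]

theorem PosSemidef.fromBlocks₁₂_mul_eq_zero {A : Matrix m m 𝕜} {B : Matrix m n 𝕜}
    {C : Matrix n m 𝕜} {D : Matrix n n 𝕜} (hM : (fromBlocks A B C D).PosSemidef)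
    {K : Matrix n n 𝕜} (hK : D * K = 0) : B * K = 0 := by
  have h := hM.mul_eq_zero_of_conjTranspose_mul_mul_eq_zero
    (X := (fromBlocks 0 0 0 K : Matrix (m ⊕ n) (m ⊕ n) 𝕜)) <| by
    simp [fromBlocks_conjTranspose, fromBlocks_multiply, Matrix.mul_assoc, hK]
  rw [fromBlocks_multiply, ← fromBlocks_zero, fromBlocks_inj] at h
  simpa only [Matrix.mul_zero, zero_add] using h.2.1

theorem PosSemidef.fromBlocks₁₂_mul_innerInverse_mul {A : Matrix m m 𝕜} {B : Matrix m n 𝕜}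
    {C : Matrix n m 𝕜} {D : Matrix n n 𝕜} (hM : (fromBlocks A B C D).PosSemidef)
    {G : Matrix n n 𝕜} (hG : D * G * D = D) : B * G * D = B := by
  have h := hM.fromBlocks₁₂_mul_eq_zero (K := 1 - G * D) <| by
    rw [Matrix.mul_sub, Matrix.mul_one, ← Matrix.mul_assoc, hG, sub_self]
  rwa [Matrix.mul_sub, Matrix.mul_one, ← Matrix.mul_assoc, sub_eq_zero, eq_comm] at h

theorem PosSemidef.mul_innerInverse_mul_fromBlocks₂₁ {A : Matrix m m 𝕜} {B : Matrix m n 𝕜}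
    {C : Matrix n m 𝕜} {D : Matrix n n 𝕜} (hM : (fromBlocks A B C D).PosSemidef)
    {G : Matrix n n 𝕜} (hG : D * G * D = D) : D * G * C = C := by
  obtain ⟨-, hBC, -, hD⟩ := isHermitian_fromBlocks_iff.mp hM.isHermitian
  have hK : (1 - D * G) * D = 0 := by rw [Matrix.sub_mul, Matrix.one_mul, hG, sub_self]
  have h := hM.fromBlocks₁₂_mul_eq_zero (K := (1 - D * G)ᴴ) <| by
    simpa only [conjTranspose_mul, hD.eq, conjTranspose_zero] using congrArg (·ᴴ) hK
  replace h : (1 - D * G) * C = 0 := by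
    simpa only [conjTranspose_mul, conjTranspose_conjTranspose, hBC, conjTranspose_zero]
      using congrArg (·ᴴ) h
  rwa [Matrix.sub_mul, Matrix.one_mul, sub_eq_zero, eq_comm] at h

end PosSemidef

theorem mul_innerInverse_mul_eq {l m n α : Type*} [Fintype m] [Fintype n] [NonUnitalSemiring α]
    {B : Matrix l m α} {C : Matrix m n α} {D G H : Matrix m m α} (hH : D * H * D = D)
    (hB : B * G * D = B) (hC : D * G * C = C) : B * H * C = B * G * C :=
  calc B * H * C = B * G * D * H * (D * G * C) := by rw [hB, hC]
    _ = B * G * (D * H * D) * G * C := by simp only [Matrix.mul_assoc]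
    _ = B * G * C := by rw [hH, hB]

theorem innerInverse_conj {n α : Type*} [Fintype n] [DecidableEq n] [CommRing α]
    {D G Q : Matrix n n α} (hQ : IsUnit Q) (hG : D * G * D = D) :
    Q⁻¹ * D * Q * (Q⁻¹ * G * Q) * (Q⁻¹ * D * Q) = Q⁻¹ * D * Q := by
  have hQ' := (isUnit_iff_isUnit_det Q).mp hQ
  simp only [Matrix.mul_assoc, mul_nonsing_inv_cancel_left _ _ hQ']
  simp only [← Matrix.mul_assoc, hG]

end Matrix

theorem schur_restriction_well_defined_general
    {d e : Type*} [Fintype d] [Fintype e] [DecidableEq d] [DecidableEq e]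
    (A : Matrix d d ℝ) (B : Matrix d e ℝ) (C : Matrix e d ℝ) (D : Matrix e e ℝ)
    (P : Matrix d d ℝ) (Q : Matrix e e ℝ) (hQ : IsUnit Q)
    (Ddag : Matrix e e ℝ) (hD : IsMoorePenrose D Ddag)
    (D'dag : Matrix e e ℝ) (hD' : IsMoorePenrose (Q⁻¹ * D * Q) D'dag)
    (hM' : (Matrix.fromBlocks (P⁻¹ * A * P) (P⁻¹ * B * Q)
        (Q⁻¹ * C * P) (Q⁻¹ * D * Q)).PosSemidef) :
    (P⁻¹ * A * P) - (P⁻¹ * B * Q) * D'dag * (Q⁻¹ * C * P) =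
      P⁻¹ * (A - B * Ddag * C) * P := by
  have hE := innerInverse_conj hQ hD.1
  have hB' := hM'.fromBlocks₁₂_mul_innerInverse_mul hD'.1
  have hC' := hM'.mul_innerInverse_mul_fromBlocks₂₁ hD'.1
  rw [← mul_innerInverse_mul_eq hE hB' hC', Matrix.mul_sub, Matrix.sub_mul]
  simp only [Matrix.mul_assoc, mul_nonsing_inv_cancel_left _ _ ((isUnit_iff_isUnit_det Q).mp hQ)]

/-- Basis independence of the generalized Schur complement (the Schur restriction is
well-defined): if the conjugated block matrix `M' = [[P⁻¹AP, P⁻¹BQ], [Q⁻¹CP, Q⁻¹DQ]]` is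
positive semi-definite, then its Schur complement equals `P⁻¹ (A - B D† C) P`. -/
theorem schur_restriction_well_defined
    {d e : Type*} [Fintype d] [Fintype e] [DecidableEq d] [DecidableEq e]
    (A : Matrix d d ℝ) (B : Matrix d e ℝ) (C : Matrix e d ℝ) (D : Matrix e e ℝ)
    (P : Matrix d d ℝ) (Q : Matrix e e ℝ) (hP : IsUnit P) (hQ : IsUnit Q)
    (Ddag : Matrix e e ℝ) (hD : IsMoorePenrose D Ddag)
    (D'dag : Matrix e e ℝ) (hD' : IsMoorePenrose (Q⁻¹ * D * Q) D'dag)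
    (hM' : (Matrix.fromBlocks (P⁻¹ * A * P) (P⁻¹ * B * Q)
        (Q⁻¹ * C * P) (Q⁻¹ * D * Q)).PosSemidef) :
    (P⁻¹ * A * P) - (P⁻¹ * B * Q) * D'dag * (Q⁻¹ * C * P) =
      P⁻¹ * (A - B * Ddag * C) * P :=
  schur_restriction_well_defined_general A B C D P Q hQ Ddag hD D'dag hD' hM'
end

section
/- (Cancellation lemma for pseudoinverses.) Let R be an invertible n×n real matrix and E an n×m real matrix. Then Eᵀ·R·(R⁻¹·E·Eᵀ·R)†·R⁻¹·E = Eᵀ·(E·Eᵀ)†·E = E†·E, where (R⁻¹·E·Eᵀ·R)†, (E·Eᵀ)† and E† denote Moore–Penrose pseudoinverses of the indicated matrices. -/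
open Matrix

lemma key_cancel {n m : Type*} [Fintype n] [Fintype m] [DecidableEq n]
    (E : Matrix n m ℝ) (K : Matrix n n ℝ)
    (hK : E * Eᵀ * K * (E * Eᵀ) = E * Eᵀ)
    (Edag : Matrix m n ℝ) (hE : IsMoorePenrose E Edag) :
    Eᵀ * K * E = Edag * E := by
  obtain ⟨h1, -, h3, h4⟩ := hE
  -- Step 1: Eᵀ * K * (E * Eᵀ) = Eᵀ
  have hz : (E * Eᴴ) * (K * (E * Eᵀ) - 1) = 0 := by
    rw [conjTranspose_eq_transpose_of_trivial, mul_sub, mul_one, ← Matrix.mul_assoc, hK,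
      sub_self]
  rw [self_mul_conjTranspose_mul_eq_zero] at hz
  have h5 : Eᵀ * K * (E * Eᵀ) = Eᵀ := by
    rw [conjTranspose_eq_transpose_of_trivial, Matrix.mul_sub, Matrix.mul_one, sub_eq_zero] at hz
    rw [Matrix.mul_assoc, hz]
  -- Step 2: E * Eᵀ * Edagᵀ = E
  have h6 : E * Eᵀ * Edagᵀ = E := by
    calc E * Eᵀ * Edagᵀ = E * (Edag * E)ᵀ := by rw [transpose_mul, Matrix.mul_assoc]
    _ = E * (Edag * E) := by rw [h4]
    _ = E := by rw [← Matrix.mul_assoc, h1]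
  calc Eᵀ * K * E = Eᵀ * K * (E * Eᵀ * Edagᵀ) := by rw [h6]
  _ = Eᵀ * K * (E * Eᵀ) * Edagᵀ := by simp only [Matrix.mul_assoc]
  _ = Eᵀ * Edagᵀ := by rw [h5]
  _ = (Edag * E)ᵀ := by rw [transpose_mul]
  _ = Edag * E := h4

/-- Cancellation lemma for pseudoinverses: for an invertible `R` and any `E`,
`Eᵀ R (R⁻¹ E Eᵀ R)† R⁻¹ E = Eᵀ (E Eᵀ)† E = E† E`. -/
theorem pseudoinverse_cancellation
    {n m : Type*} [Fintype n] [Fintype m] [DecidableEq n] [DecidableEq m]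
    (R : Matrix n n ℝ) (hR : IsUnit R)
    (E : Matrix n m ℝ)
    (Gdag : Matrix n n ℝ) (hG : IsMoorePenrose (R⁻¹ * E * Eᵀ * R) Gdag)
    (Hdag : Matrix n n ℝ) (hH : IsMoorePenrose (E * Eᵀ) Hdag)
    (Edag : Matrix m n ℝ) (hE : IsMoorePenrose E Edag) :
    Eᵀ * R * Gdag * (R⁻¹ * E) = Eᵀ * Hdag * E ∧ Eᵀ * Hdag * E = Edag * E := by
  have hdet : IsUnit R.det := (Matrix.isUnit_iff_isUnit_det R).mp hR
  have hRinv : R * R⁻¹ = 1 := Matrix.mul_nonsing_inv R hdet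
  have hinvR : R⁻¹ * R = 1 := Matrix.nonsing_inv_mul R hdet
  have hHkey : E * Eᵀ * Hdag * (E * Eᵀ) = E * Eᵀ := hH.1
  have hHeq : Eᵀ * Hdag * E = Edag * E := key_cancel E Hdag hHkey Edag hE
  have hGkey : E * Eᵀ * (R * Gdag * R⁻¹) * (E * Eᵀ) = E * Eᵀ := by
    have h := hG.1
    have h2 : R * (R⁻¹ * E * Eᵀ * R * Gdag * (R⁻¹ * E * Eᵀ * R)) * R⁻¹
        = R * (R⁻¹ * E * Eᵀ * R) * R⁻¹ := by rw [h]
    calc E * Eᵀ * (R * Gdag * R⁻¹) * (E * Eᵀ)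
        = R * (R⁻¹ * E * Eᵀ * R * Gdag * (R⁻¹ * E * Eᵀ * R)) * R⁻¹ := by
          simp only [← Matrix.mul_assoc, hRinv, Matrix.one_mul]
          simp only [Matrix.mul_assoc, hRinv, hinvR, Matrix.mul_one]
    _ = R * (R⁻¹ * E * Eᵀ * R) * R⁻¹ := h2
    _ = E * Eᵀ := by
          simp only [← Matrix.mul_assoc, hRinv, Matrix.one_mul]
          simp only [Matrix.mul_assoc, hRinv, Matrix.mul_one]
  have hGeq : Eᵀ * (R * Gdag * R⁻¹) * E = Edag * E :=
    key_cancel E (R * Gdag * R⁻¹) hGkey Edag hE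
  have hGeq' : Eᵀ * R * Gdag * (R⁻¹ * E) = Edag * E := by
    rw [← hGeq]; simp only [Matrix.mul_assoc]
  exact ⟨hGeq'.trans hHeq.symm, hHeq⟩
end

section
/- (Extremal/adjunction characterization of the generalized Schur complement.) Let A be a d×d, B a d×e, D an e×e real matrix, and suppose M = [[A, B], [Bᵀ, D]] is positive semi-definite. Then for every positive semi-definite d×d real matrix N, the block matrix M − [[N, 0], [0, 0]] is positive semi-definite if and only if (A − B·D†·Bᵀ) − N is positive semi-definite, where D† is the Moore–Penrose pseudoinverse of D. In other words, A − B·D†·Bᵀ is the maximum, in the Loewner order, of the set of positive semi-definite N with M − [[N, 0], [0, 0]] ⪰ 0. -/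
open Matrix

/-!
Positivity of `M = [[A, B], [Bᵀ, D]]` forces `ker D ⊆ ker B`, hence `B = B D† D`. With
`S = B D†`, the congruence by the unipotent matrix `[[1, S], [0, 1]]` then carries `M` to the
block diagonal matrix `[[A - S D Sᵀ, 0], [0, D]]`, and `S D Sᵀ = B D† Bᵀ`. Since subtracting
`[[N, 0], [0, 0]]` only replaces `A` by `A - N`, both sides of the equivalence say
`A - N - B D† Bᵀ ⪰ 0`.
-/

theorem eq_zero_of_forall_nonneg_add_mul {K : Type*} [Field K] [LinearOrder K]
    [IsStrictOrderedRing K] {a b : K} (h : ∀ t, 0 ≤ a + t * b) : b = 0 := by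
  by_contra hb
  have := h (-(a + 1) / b)
  rw [div_mul_cancel₀ _ hb] at this
  linarith

namespace Matrix

variable {m n R : Type*} [Fintype n]

theorem mul_mul_eq_of_forall_mulVec_eq_zero [CommRing R] {B : Matrix m n R} {D X : Matrix n n R}
    (hX : D * X * D = D) (hker : ∀ v, D *ᵥ v = 0 → B *ᵥ v = 0) : B * X * D = B := by
  refine ext_iff_mulVec.mpr fun v => ?_
  have : D *ᵥ (v - (X * D) *ᵥ v) = 0 := by
    rw [mulVec_sub, mulVec_mulVec, ← Matrix.mul_assoc, hX, sub_self]
  rw [Matrix.mul_assoc, ← mulVec_mulVec, eq_comm, ← sub_eq_zero, ← mulVec_sub]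
  exact hker _ this

variable [Fintype m]

theorem posSemidef_fromBlocks_zero_iff [CommRing R] [PartialOrder R] [StarRing R]
    [IsOrderedAddMonoid R] {A : Matrix m m R} {D : Matrix n n R} :
    (fromBlocks A 0 0 D).PosSemidef ↔ A.PosSemidef ∧ D.PosSemidef := by
  refine ⟨fun h => ⟨h.submatrix Sum.inl, h.submatrix Sum.inr⟩,
    fun ⟨hA, hD⟩ => .of_dotProduct_mulVec_nonneg (hA.1.fromBlocks (by simp) hD.1) fun x => ?_⟩
  obtain ⟨u, v, rfl⟩ : ∃ u v, Sum.elim u v = x := ⟨_, _, Sum.elim_comp_inl_inr x⟩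
  simpa [Function.star_sumElim, fromBlocks_mulVec] using
    add_nonneg (hA.dotProduct_mulVec_nonneg u) (hD.dotProduct_mulVec_nonneg v)

theorem fromBlocks_eq_mul_fromBlocks_zero_mul [CommRing R] [StarRing R] [DecidableEq m]
    [DecidableEq n] (A : Matrix m m R) (S : Matrix m n R) {D : Matrix n n R}
    (hD : D.IsHermitian) :
    fromBlocks A (S * D) (S * D)ᴴ D =
      fromBlocks 1 S 0 1 * fromBlocks (A - S * D * Sᴴ) 0 0 D * (fromBlocks 1 S 0 1)ᴴ := by
  simp [fromBlocks_multiply, fromBlocks_conjTranspose, hD.eq, Matrix.mul_assoc]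

theorem posSemidef_fromBlocks_iff_of_mul_mul_eq [CommRing R] [PartialOrder R] [StarRing R]
    [IsOrderedAddMonoid R] {A : Matrix m m R} {B : Matrix m n R} {D X : Matrix n n R}
    (hD : D.IsHermitian) (hB : B * X * D = B) :
    (fromBlocks A B Bᴴ D).PosSemidef ↔ (A - B * X * Bᴴ).PosSemidef ∧ D.PosSemidef := by
  classical
  have hU : IsUnit (fromBlocks 1 (B * X) 0 1 : Matrix (m ⊕ n) (m ⊕ n) R) := by
    simp [isUnit_iff_isUnit_det]
  have hSchur : B * X * D * (B * X)ᴴ = B * X * Bᴴ := by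
    conv_rhs => arg 2; rw [← hB, conjTranspose_mul, hD.eq]
    rw [Matrix.mul_assoc]
  have hfac := fromBlocks_eq_mul_fromBlocks_zero_mul A (B * X) hD
  rw [hSchur, hB] at hfac
  rw [hfac, ← star_eq_conjTranspose, hU.posSemidef_star_right_conjugate_iff,
    posSemidef_fromBlocks_zero_iff]

theorem PosSemidef.mulVec_eq_zero_of_fromBlocks {A : Matrix m m ℝ} {B : Matrix m n ℝ}
    {D : Matrix n n ℝ} (hM : (fromBlocks A B Bᵀ D).PosSemidef) {v : n → ℝ}
    (hv : D *ᵥ v = 0) : B *ᵥ v = 0 := by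
  -- On the vectors `(B v, t v)` the quadratic form of the block matrix is affine in `t`.
  set u := B *ᵥ v
  have hlin : ∀ t : ℝ, 0 ≤ u ⬝ᵥ A *ᵥ u + t * (2 * (u ⬝ᵥ u)) := fun t => by
    have hvu : v ⬝ᵥ Bᵀ *ᵥ u = u ⬝ᵥ u := by
      rw [dotProduct_mulVec, vecMul_transpose, dotProduct_comm]
    have := hM.dotProduct_mulVec_nonneg (Sum.elim u (t • v))
    simp only [star_trivial, fromBlocks_mulVec, sumElim_dotProduct_sumElim, Sum.elim_comp_inl,
      Sum.elim_comp_inr, mulVec_smul, hv, smul_zero, add_zero, dotProduct_add, smul_dotProduct,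
      dotProduct_smul, smul_eq_mul, hvu] at this
    linarith
  exact dotProduct_self_eq_zero.mp (by linarith [eq_zero_of_forall_nonneg_add_mul hlin])

end Matrix

theorem schur_complement_extremal_characterization_general
    {d e : Type*} [Fintype d] [Fintype e]
    (A : Matrix d d ℝ) (B : Matrix d e ℝ) (D : Matrix e e ℝ)
    (Ddag : Matrix e e ℝ) (hD : IsMoorePenrose D Ddag)
    (hM : (Matrix.fromBlocks A B Bᵀ D).PosSemidef) :
    ∀ N : Matrix d d ℝ, N.PosSemidef →
      ((Matrix.fromBlocks A B Bᵀ D - Matrix.fromBlocks N 0 0 0).PosSemidef ↔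
        (A - B * Ddag * Bᵀ - N).PosSemidef) := by
  intro N _
  have hDpsd : D.PosSemidef := hM.submatrix Sum.inr
  have hB : B * Ddag * D = B :=
    mul_mul_eq_of_forall_mulVec_eq_zero hD.1 fun _ => hM.mulVec_eq_zero_of_fromBlocks
  have hsub : fromBlocks A B Bᵀ D - fromBlocks N 0 0 0 = fromBlocks (A - N) B Bᴴ D := by
    ext (i | i) (j | j) <;> simp
  rw [hsub, posSemidef_fromBlocks_iff_of_mul_mul_eq hDpsd.1 hB, sub_right_comm,
    conjTranspose_eq_transpose_of_trivial, and_iff_left hDpsd]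

/-- Extremal/adjunction characterization of the generalized Schur complement: for
`M = [[A, B], [Bᵀ, D]]` positive semi-definite and any positive semi-definite `N`,
`M − [[N, 0], [0, 0]] ⪰ 0` iff `(A − B D† Bᵀ) − N ⪰ 0`. -/
theorem schur_complement_extremal_characterization
    {d e : Type*} [Fintype d] [Fintype e] [DecidableEq d] [DecidableEq e]
    (A : Matrix d d ℝ) (B : Matrix d e ℝ) (D : Matrix e e ℝ)
    (Ddag : Matrix e e ℝ) (hD : IsMoorePenrose D Ddag)
    (hM : (Matrix.fromBlocks A B Bᵀ D).PosSemidef) :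
    ∀ N : Matrix d d ℝ, N.PosSemidef →
      ((Matrix.fromBlocks A B Bᵀ D - Matrix.fromBlocks N 0 0 0).PosSemidef ↔
        (A - B * Ddag * Bᵀ - N).PosSemidef) :=
  schur_complement_extremal_characterization_general A B D Ddag hD hM
end

section
/- (Block kernel-lifting identity used in the maximality lemma.) Let A be a d×d, B a d×e, D an e×e real matrix, and suppose M = [[A, B], [Bᵀ, D]] is positive semi-definite. Then for every vector c ∈ ℝ^d, M applied (as mulVec) to the block vector (c, −D†·Bᵀ·c) ∈ ℝ^d ⊕ ℝ^e equals the block vector ((A − B·D†·Bᵀ)·c, 0), where D† is the Moore–Penrose pseudoinverse of D. -/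
open Matrix

/-- Block kernel-lifting identity: if `M = [[A, B], [Bᵀ, D]]` is positive semi-definite,
then for every `c`, `M (c, −D† Bᵀ c) = ((A − B D† Bᵀ) c, 0)`. -/
theorem block_kernel_lifting
    {d e : Type*} [Fintype d] [Fintype e] [DecidableEq d] [DecidableEq e]
    (A : Matrix d d ℝ) (B : Matrix d e ℝ) (D : Matrix e e ℝ)
    (Ddag : Matrix e e ℝ) (hD : IsMoorePenrose D Ddag)
    (hM : (Matrix.fromBlocks A B Bᵀ D).PosSemidef) :
    ∀ c : d → ℝ,
      (Matrix.fromBlocks A B Bᵀ D).mulVec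
          (Sum.elim c (-((Ddag * Bᵀ).mulVec c))) =
        Sum.elim ((A - B * Ddag * Bᵀ).mulVec c) 0 := by
  obtain ⟨h1, h2, h3, h4⟩ := hD
  -- D is symmetric
  have hDsym : Dᵀ = D := by
    have h := hM.1
    rw [Matrix.IsHermitian, Matrix.conjTranspose_eq_transpose_of_trivial,
      Matrix.fromBlocks_transpose] at h
    simpa using congrArg Matrix.toBlocks₂₂ h
  -- D D D† = D
  have hDDDdag : D * (D * Ddag) = D := by
    calc D * (D * Ddag) = Dᵀ * (D * Ddag)ᵀ := by rw [hDsym, h3]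
    _ = ((D * Ddag) * D)ᵀ := (Matrix.transpose_mul _ _).symm
    _ = D := by rw [h1, hDsym]
  -- D D† is idempotent
  have hPP : (D * Ddag) * (D * Ddag) = D * Ddag := by
    calc (D * Ddag) * (D * Ddag) = (D * Ddag * D) * Ddag := by
          rw [Matrix.mul_assoc (D * Ddag) D Ddag]
    _ = D * Ddag := by rw [h1]
  -- kernel of D is contained in kernel of B
  have hker : ∀ x : e → ℝ, D *ᵥ x = 0 → B *ᵥ x = 0 := by
    intro x hx
    have h0 : star (Sum.elim (0 : d → ℝ) x) ⬝ᵥ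
        (Matrix.fromBlocks A B Bᵀ D) *ᵥ (Sum.elim (0 : d → ℝ) x) = 0 := by
      rw [Matrix.fromBlocks_mulVec]
      simp [hx]
    have h := (hM.dotProduct_mulVec_zero_iff _).mp h0
    rw [Matrix.fromBlocks_mulVec] at h
    funext i
    have := congrFun h (Sum.inl i)
    simpa using this
  have hPvec : ∀ v : e → ℝ, v ᵥ* (D * Ddag) = (D * Ddag) *ᵥ v := by
    intro v
    conv_lhs => rw [← h3]
    rw [Matrix.vecMul_transpose]
  -- D D† Bᵀ y = Bᵀ y
  have key : ∀ y : d → ℝ, (D * Ddag) *ᵥ (Bᵀ *ᵥ y) = Bᵀ *ᵥ y := by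
    intro y
    have hz : D *ᵥ (Bᵀ *ᵥ y - (D * Ddag) *ᵥ (Bᵀ *ᵥ y)) = 0 := by
      rw [Matrix.mulVec_sub, Matrix.mulVec_mulVec (Bᵀ *ᵥ y) D (D * Ddag), hDDDdag, sub_self]
    have hBz := hker _ hz
    have h5 : (Bᵀ *ᵥ y - (D * Ddag) *ᵥ (Bᵀ *ᵥ y)) ⬝ᵥ (Bᵀ *ᵥ y) = 0 := by
      rw [Matrix.dotProduct_mulVec, Matrix.vecMul_transpose, hBz, zero_dotProduct]
    have hPz : (D * Ddag) *ᵥ (Bᵀ *ᵥ y - (D * Ddag) *ᵥ (Bᵀ *ᵥ y)) = 0 := by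
      rw [Matrix.mulVec_sub, Matrix.mulVec_mulVec (Bᵀ *ᵥ y) (D * Ddag) (D * Ddag), hPP,
        sub_self]
    have h6 : (Bᵀ *ᵥ y - (D * Ddag) *ᵥ (Bᵀ *ᵥ y)) ⬝ᵥ ((D * Ddag) *ᵥ (Bᵀ *ᵥ y)) = 0 := by
      rw [Matrix.dotProduct_mulVec, hPvec, hPz, zero_dotProduct]
    have hz2 : (Bᵀ *ᵥ y - (D * Ddag) *ᵥ (Bᵀ *ᵥ y)) ⬝ᵥ
        (Bᵀ *ᵥ y - (D * Ddag) *ᵥ (Bᵀ *ᵥ y)) = 0 := by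
      rw [dotProduct_sub, h5, h6, sub_self]
    have hz0 := dotProduct_self_eq_zero.mp hz2
    exact (sub_eq_zero.mp hz0).symm
  intro c
  rw [Matrix.fromBlocks_mulVec]
  have hfst : A *ᵥ (Sum.elim c (-((Ddag * Bᵀ) *ᵥ c)) ∘ Sum.inl)
      + B *ᵥ (Sum.elim c (-((Ddag * Bᵀ) *ᵥ c)) ∘ Sum.inr)
      = (A - B * Ddag * Bᵀ) *ᵥ c := by
    simp only [Sum.elim_comp_inl, Sum.elim_comp_inr, Matrix.mulVec_neg,
      Matrix.mulVec_mulVec, Matrix.sub_mulVec, Matrix.mul_assoc]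
    ring_nf
  have hsnd : Bᵀ *ᵥ (Sum.elim c (-((Ddag * Bᵀ) *ᵥ c)) ∘ Sum.inl)
      + D *ᵥ (Sum.elim c (-((Ddag * Bᵀ) *ᵥ c)) ∘ Sum.inr) = 0 := by
    simp only [Sum.elim_comp_inl, Sum.elim_comp_inr, Matrix.mulVec_neg,
      Matrix.mulVec_mulVec, ← Matrix.mul_assoc]
    have := key c
    rw [Matrix.mulVec_mulVec] at this
    rw [show D * Ddag * Bᵀ = (D * Ddag) * Bᵀ from rfl] at *
    rw [← Matrix.mulVec_mulVec, key c]
    simp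
  rw [hfst, hsnd]
end

section
/- Let V be a finite-dimensional real inner product space, let L : V → V be a self-adjoint linear operator that is positive semi-definite (⟨L(v), v⟩ ≥ 0 for all v ∈ V), and let W ⊆ V be a subspace. Then for every w ∈ W there exists w' in the orthogonal complement W^⊥ of W such that L(w + w') ∈ W. -/
/-!
Compress `L` to `Wᗮ`: the operator `C = P L P` on `Wᗮ` (with `P` the orthogonal projection) is
again positive, so its range is `(ker C)ᗮ`. Positivity forces `L y = 0` whenever `⟪L y, y⟫ = 0`,
hence `L` kills `ker C`, and by symmetry `P (L w)` is orthogonal to `ker C`. Solving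
`C x = -P (L w)` gives `P (L (w + x)) = 0`, that is `L (w + x) ∈ Wᗮᗮ = W`.
-/

namespace LinearMap

variable {𝕜 E F : Type*} [RCLike 𝕜] [NormedAddCommGroup E] [InnerProductSpace 𝕜 E]
  [NormedAddCommGroup F] [InnerProductSpace 𝕜 F]

theorem IsPositive.apply_eq_zero_of_inner_self_eq_zero {T : E →ₗ[𝕜] E} (hT : T.IsPositive)
    {v : E} (hv : inner 𝕜 (T v) v = 0) : T v = 0 := by
  set a := RCLike.re (inner 𝕜 (T (T v)) (T v))
  set b := ‖T v‖ ^ 2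
  have hquad : ∀ t : ℝ, 0 ≤ a * (t * t) + 2 * b * t + 0 := by
    intro t
    have h := hT.re_inner_nonneg_left (v + (t : 𝕜) • T v)
    have hsymm : inner 𝕜 (T (T v)) v = inner 𝕜 (T v) (T v) := hT.isSymmetric _ _
    simp only [map_add, map_smul, inner_add_left, inner_add_right, inner_smul_left,
      inner_smul_right, RCLike.conj_ofReal, hsymm, hv, RCLike.re_ofReal_mul, map_zero,
      inner_self_eq_norm_sq] at h
    linear_combination h
  have hb : b ^ 2 ≤ 0 := by simpa [discrim] using discrim_le_zero hquad
  have hb0 : b = 0 := pow_eq_zero_iff two_ne_zero |>.mp (le_antisymm hb (sq_nonneg b))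
  simpa [b] using hb0

theorem IsSymmetric.range_eq_orthogonal_ker [FiniteDimensional 𝕜 E] {T : E →ₗ[𝕜] E}
    (hT : T.IsSymmetric) : range T = (ker T)ᗮ := by
  rw [← hT.orthogonal_range, Submodule.orthogonal_orthogonal]

theorem IsPositive.exists_adjoint_apply_add_eq_zero [FiniteDimensional 𝕜 E]
    [FiniteDimensional 𝕜 F] {T : E →ₗ[𝕜] E} (hT : T.IsPositive) (S : F →ₗ[𝕜] E) (w : E) :
    ∃ x, S.adjoint (T (w + S x)) = 0 := by
  set C := S.adjoint ∘ₗ T ∘ₗ S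
  have hC : C.IsPositive := hT.adjoint_conj S
  have hker : ∀ y ∈ ker C, T (S y) = 0 := fun y hy ↦ by
    refine hT.apply_eq_zero_of_inner_self_eq_zero ?_
    rw [← adjoint_inner_left]
    change inner 𝕜 (C y) y = 0
    rw [mem_ker.mp hy, inner_zero_left]
  have hrange : -S.adjoint (T w) ∈ range C := by
    rw [hC.isSymmetric.range_eq_orthogonal_ker]
    intro y hy
    rw [inner_neg_right, adjoint_inner_right, ← hT.isSymmetric, hker y hy, inner_zero_left,
      neg_zero]
  obtain ⟨x, hx⟩ := hrange
  refine ⟨x, ?_⟩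
  rw [map_add, map_add, ← neg_eq_iff_add_eq_zero, ← hx]
  rfl

end LinearMap

open scoped RealInnerProductSpace

/-- For a self-adjoint positive semi-definite operator `L` on a finite-dimensional real
inner product space `V` and a subspace `W ⊆ V`, every `w ∈ W` admits `w' ∈ Wᗮ` such that
`L (w + w') ∈ W`. -/
theorem exists_perp_correction
    {V : Type*} [NormedAddCommGroup V] [InnerProductSpace ℝ V] [FiniteDimensional ℝ V]
    (L : V →ₗ[ℝ] V)
    (hsa : ∀ u v : V, ⟪L u, v⟫ = ⟪u, L v⟫)
    (hpsd : ∀ v : V, 0 ≤ ⟪L v, v⟫)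
    (W : Submodule ℝ V) :
    ∀ w ∈ W, ∃ w' ∈ Wᗮ, L (w + w') ∈ W := by
  intro w _
  have hL : L.IsPositive := ⟨hsa, hpsd⟩
  obtain ⟨x, hx⟩ := hL.exists_adjoint_apply_add_eq_zero Wᗮ.subtype w
  refine ⟨x, x.2, ?_⟩
  have hperp : L (w + x) ∈ (LinearMap.range Wᗮ.subtype)ᗮ := by
    rw [LinearMap.orthogonal_range]
    exact hx
  rwa [Submodule.range_subtype, Submodule.orthogonal_orthogonal] at hperp
end

section
/- (Kernel of the generalized Schur complement is the projection of the kernel.) Let A be a d×d, B a d×e, D an e×e real matrix, and suppose M = [[A, B], [Bᵀ, D]] is positive semi-definite. Then for every x ∈ ℝ^d, (A − B·D†·Bᵀ)·x = 0 if and only if there exists y ∈ ℝ^e such that A·x + B·y = 0 and Bᵀ·x + D·y = 0 (i.e., the block vector (x, y) lies in the kernel of M); here D† is the Moore–Penrose pseudoinverse of D. -/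
open Matrix

/-- If `[[A,B],[Bᵀ,D]]` is PSD then `ker D ⊆ ker B`. -/
lemma ker_D_subset_ker_B
    {d e : Type*} [Fintype d] [Fintype e] [DecidableEq d] [DecidableEq e]
    (A : Matrix d d ℝ) (B : Matrix d e ℝ) (D : Matrix e e ℝ)
    (hM : (Matrix.fromBlocks A B Bᵀ D).PosSemidef)
    (v : e → ℝ) (hv : D.mulVec v = 0) : B.mulVec v = 0 := by
  set z : d ⊕ e → ℝ := Sum.elim 0 v with hz
  have hMz : (Matrix.fromBlocks A B Bᵀ D).mulVec z = Sum.elim (B.mulVec v) 0 := by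
    rw [hz, fromBlocks_mulVec]
    simp [hv]
  have hq : star z ⬝ᵥ (Matrix.fromBlocks A B Bᵀ D).mulVec z = 0 := by
    rw [hMz, hz]
    simp [sumElim_dotProduct_sumElim]
  have h0 := (hM.dotProduct_mulVec_zero_iff z).mp hq
  rw [hMz] at h0
  funext i
  simpa using congrFun h0 (Sum.inl i)

/-- Matrix version: if `D * N = 0` then `B * N = 0`. -/
lemma ker_D_subset_ker_B_mat
    {d e f : Type*} [Fintype d] [Fintype e] [Fintype f] [DecidableEq d] [DecidableEq e]
    (A : Matrix d d ℝ) (B : Matrix d e ℝ) (D : Matrix e e ℝ)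
    (hM : (Matrix.fromBlocks A B Bᵀ D).PosSemidef)
    (N : Matrix e f ℝ) (hN : D * N = 0) : B * N = 0 := by
  ext i j
  have hcol : D.mulVec (fun k => N k j) = 0 := by
    funext i'
    have := congrFun (congrFun hN i') j
    simpa [Matrix.mul_apply, Matrix.mulVec, dotProduct] using this
  have := congrFun (ker_D_subset_ker_B A B D hM _ hcol) i
  simpa [Matrix.mul_apply, Matrix.mulVec, dotProduct] using this

/-- Kernel of the generalized Schur complement is the projection of the kernel: for
`M = [[A, B], [Bᵀ, D]]` positive semi-definite, `(A − B D† Bᵀ) x = 0` iff there is `y`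
with `A x + B y = 0` and `Bᵀ x + D y = 0`. -/
theorem schur_complement_kernel
    {d e : Type*} [Fintype d] [Fintype e] [DecidableEq d] [DecidableEq e]
    (A : Matrix d d ℝ) (B : Matrix d e ℝ) (D : Matrix e e ℝ)
    (Ddag : Matrix e e ℝ) (hD : IsMoorePenrose D Ddag)
    (hM : (Matrix.fromBlocks A B Bᵀ D).PosSemidef) :
    ∀ x : d → ℝ,
      (A - B * Ddag * Bᵀ).mulVec x = 0 ↔
        ∃ y : e → ℝ, A.mulVec x + B.mulVec y = 0 ∧ Bᵀ.mulVec x + D.mulVec y = 0 := by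
  obtain ⟨hp1, hp2, hp3, hp4⟩ := hD
  -- D is symmetric
  have hDsymm : Dᵀ = D := by
    have h := hM.isHermitian
    rw [Matrix.IsHermitian, Matrix.conjTranspose_eq_transpose_of_trivial,
      Matrix.fromBlocks_transpose] at h
    have := congrArg Matrix.toBlocks₂₂ h
    simpa using this
  -- B * Ddag * D = B
  have h1 : B * Ddag * D = B := by
    have hN : D * (Ddag * D - 1) = 0 := by
      rw [Matrix.mul_sub, Matrix.mul_one, ← Matrix.mul_assoc, hp1, sub_self]
    have := ker_D_subset_ker_B_mat A B D hM _ hN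
    rw [Matrix.mul_sub, Matrix.mul_one, sub_eq_zero, ← Matrix.mul_assoc] at this
    exact this
  -- D * (D * Ddag) = D via symmetry, hence B * (D * Ddag) = B
  have hDDdag : D * (1 - D * Ddag) = 0 := by
    have h0 : (1 - D * Ddag) * D = 0 := by
      rw [Matrix.sub_mul, Matrix.one_mul, hp1, sub_self]
    calc D * (1 - D * Ddag) = ((1 - D * Ddag)ᵀ * Dᵀ)ᵀ := by
          rw [Matrix.transpose_mul, Matrix.transpose_transpose, Matrix.transpose_transpose]
      _ = 0 := by
          rw [Matrix.transpose_sub, Matrix.transpose_one, hp3, hDsymm, h0,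
            Matrix.transpose_zero]
  have h2 : B * (D * Ddag) = B := by
    have := ker_D_subset_ker_B_mat A B D hM _ hDDdag
    rw [Matrix.mul_sub, Matrix.mul_one, sub_eq_zero] at this
    exact this.symm
  -- D * Ddag * Bᵀ = Bᵀ
  have h3 : D * Ddag * Bᵀ = Bᵀ := by
    have := congrArg Matrix.transpose h2
    rw [Matrix.transpose_mul, hp3] at this
    exact this
  intro x
  constructor
  · intro h
    have key : (B * Ddag * Bᵀ) *ᵥ x = B *ᵥ (Ddag *ᵥ (Bᵀ *ᵥ x)) := by
      rw [← Matrix.mulVec_mulVec, ← Matrix.mulVec_mulVec]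
    refine ⟨-(Ddag.mulVec (Bᵀ.mulVec x)), ?_, ?_⟩
    · rw [Matrix.mulVec_neg, ← key, ← sub_eq_add_neg, ← Matrix.sub_mulVec]
      exact h
    · rw [Matrix.mulVec_neg, Matrix.mulVec_mulVec, Matrix.mulVec_mulVec, h3]
      simp
  · rintro ⟨y, hx, hy⟩
    have hBt : Bᵀ.mulVec x = -(D.mulVec y) := eq_neg_of_add_eq_zero_left hy
    have : (B * Ddag * Bᵀ).mulVec x = -(B.mulVec y) := by
      rw [← Matrix.mulVec_mulVec, ← Matrix.mulVec_mulVec, hBt]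
      simp only [Matrix.mulVec_neg, Matrix.mulVec_mulVec, ← Matrix.mul_assoc, h1]
    rw [Matrix.sub_mulVec, this, sub_neg_eq_add, hx]
end
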